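/- arXiv:2007.16086 — 2 statements merged into one kernel-verified Lean document; each statement's English description precedes it below -/
import Mathlib

section
/- (Bretschneider's formula) For a quadrilateral with side lengths a, b, c, d, semiperimeter s = (a+b+c+d)/2, opposite angles α and γ, and algebraic area K satisfying K = (1/2)(ad·sin α + bc·sin γ) and a² + d² − 2ad·cos α = b² + c² − 2bc·cos γ, one has K² = (s−a)(s−b)(s−c)(s−d) − abcd·cos²((α+γ)/2). -/
open Real

/-- Bretschneider's formula: for a quadrilateral with side lengths `a, b, c, d`,
semiperimeter `s`, opposite angles `α, γ` and algebraic area `K` satisfying the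
two standard relations, one has
`K² = (s−a)(s−b)(s−c)(s−d) − abcd cos²((α+γ)/2)`. -/
theorem bretschneider (a b c d α γ K s : ℝ)
    (ha : 0 < a) (hb : 0 < b) (hc : 0 < c) (hd : 0 < d)
    (hs : s = (a + b + c + d) / 2)
    (hK : K = (1 / 2) * (a * d * Real.sin α + b * c * Real.sin γ))
    (hlc : a ^ 2 + d ^ 2 - 2 * a * d * Real.cos α
         = b ^ 2 + c ^ 2 - 2 * b * c * Real.cos γ) :
    K ^ 2 = (s - a) * (s - b) * (s - c) * (s - d)
            - a * b * c * d * Real.cos ((α + γ) / 2) ^ 2 := by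
  have h1 : Real.cos ((α + γ) / 2) ^ 2 = 1 / 2 + Real.cos (α + γ) / 2 := by
    rw [Real.cos_sq, show 2*((α+γ)/2) = α+γ from by ring]
  rw [h1, Real.cos_add]
  have hsa := Real.sin_sq_add_cos_sq α
  have hsc := Real.sin_sq_add_cos_sq γ
  subst hK hs
  linear_combination ((a*d)^2/4) * hsa + ((b*c)^2/4) * hsc +
    ((a^2+d^2-b^2-c^2) + (2*a*d*Real.cos α - 2*b*c*Real.cos γ))/16 * hlc
end

section
/- Let n ≥ 4 and let θ₁, …, θₙ be positive reals with θ₁ + ⋯ + θₙ = (n−2)π. Then there exist two cyclically consecutive indices i, i+1 (indices mod n) such that θᵢ < π and θ_{i+1} < 2π (or θ_{i+1} < π and θᵢ < 2π). -/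
open Real Finset

/-- Let `n ≥ 4` and `θ₁, …, θₙ` positive reals with sum `(n−2)π`. Then there exist two
cyclically consecutive indices `i, i+1` such that `θᵢ < π` and `θ_{i+1} < 2π`, or
`θ_{i+1} < π` and `θᵢ < 2π`. -/
theorem exists_consecutive_small_angles (n : ℕ) [NeZero n] (hn : 4 ≤ n)
    (θ : Fin n → ℝ) (hpos : ∀ i, 0 < θ i)
    (hsum : ∑ i, θ i = ((n : ℝ) - 2) * π) :
    ∃ i : Fin n, (θ i < π ∧ θ (i + 1) < 2 * π) ∨ (θ (i + 1) < π ∧ θ i < 2 * π) := by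
  by_contra hcon
  push_neg at hcon
  set S : Finset (Fin n) := univ.filter (fun i => θ i < π) with hS
  set T : Finset (Fin n) := S.image (· + 1) with hT
  have hinj : Function.Injective (fun i : Fin n => i + 1) := add_left_injective (1 : Fin n)
  have hcard : T.card = S.card := Finset.card_image_of_injective _ hinj
  have hST : ∀ i, i ∈ T → i ∉ S := by
    intro i hiT hiS
    simp only [hT, Finset.mem_image] at hiT
    obtain ⟨j, hjS, rfl⟩ := hiT
    simp only [hS, Finset.mem_filter] at hjS hiS
    have h1 := (hcon j).1 hjS.2
    have := pi_pos
    linarith [hiS.2]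
  have key : ∀ i, π + ((if i ∈ T then π else 0) - (if i ∈ S then π else 0)) ≤ θ i := by
    intro i
    by_cases hiT : i ∈ T
    · have hiS : i ∉ S := hST i hiT
      simp only [hiT, hiS, if_true, if_false]
      simp only [hT, Finset.mem_image] at hiT
      obtain ⟨j, hjS, rfl⟩ := hiT
      simp only [hS, Finset.mem_filter] at hjS
      have := (hcon j).1 hjS.2
      linarith
    · by_cases hiS : i ∈ S
      · simp only [hiT, hiS, if_true, if_false]
        have := hpos i; linarith
      · simp only [hiT, hiS, if_false]
        simp only [hS, Finset.mem_filter, Finset.mem_univ, true_and, not_lt] at hiS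
        linarith
  have hsum2 : ∑ i, (π + ((if i ∈ T then π else 0) - (if i ∈ S then π else 0))) ≤ ∑ i, θ i :=
    Finset.sum_le_sum (fun i _ => key i)
  have hTsum : ∑ i : Fin n, (if i ∈ T then π else (0:ℝ)) = T.card * π := by
    rw [Finset.sum_ite_mem, Finset.univ_inter, Finset.sum_const, nsmul_eq_mul]
  have hSsum : ∑ i : Fin n, (if i ∈ S then π else (0:ℝ)) = S.card * π := by
    rw [Finset.sum_ite_mem, Finset.univ_inter, Finset.sum_const, nsmul_eq_mul]
  rw [Finset.sum_add_distrib, Finset.sum_sub_distrib, hTsum, hSsum, hcard,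
    Finset.sum_const, Finset.card_univ, Fintype.card_fin, nsmul_eq_mul, hsum] at hsum2
  have := pi_pos
  nlinarith
end
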